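/- arXiv:1802.07077 — 3 statements merged into one kernel-verified Lean document; each statement's English description precedes it below -/
import Mathlib

section
/- The d-dimensional Mehler kernel g_λ(x,t,y) = (2π sinh(λt)/λ)^{-d/2} exp[-λ(cosh(λt)(|x|²+|y|²) - 2⟨x,y⟩)/(2 sinh(λt))] satisfies the semigroup (Chapman–Kolmogorov) composition law: ∫_{ℝ^d} g_λ(x,s,z) g_λ(z,t,y) dz = g_λ(x,s+t,y) for all x,y ∈ ℝ^d and s,t > 0. -/
open Real MeasureTheory
open scoped RealInnerProductSpace

noncomputable def mehler (d : ℕ) (lam : ℝ) (x : EuclideanSpace ℝ (Fin d)) (t : ℝ)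
    (y : EuclideanSpace ℝ (Fin d)) : ℝ :=
  (2 * Real.pi * Real.sinh (lam * t) / lam) ^ (-(d : ℝ) / 2) *
    Real.exp (-(lam * (Real.cosh (lam * t) * (‖x‖ ^ 2 + ‖y‖ ^ 2) - 2 * ⟪x, y⟫)) /
      (2 * Real.sinh (lam * t)))

/-!
Both factors of the integrand are Gaussians in `z`, so the `z`-integral is a Gaussian integral
with a linear term and can be done by completing the square: Gaussian kernels
`exp (-(a‖x‖² + b‖z‖² - 2c⟪x, z⟫))` compose to a Gaussian kernel. For the Mehler kernel the
resulting coefficients and normalising constant collapse to those of time `s + t` by the addition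
formulas for `sinh` and `cosh` and `cosh² = sinh² + 1`.
-/

section GaussianKernel

variable {V : Type*} [NormedAddCommGroup V] [InnerProductSpace ℝ V] [FiniteDimensional ℝ V]
  [MeasurableSpace V] [BorelSpace V]

theorem integral_rexp_neg_mul_sq_norm_add_inner {b : ℝ} (hb : 0 < b) (w : V) :
    ∫ v : V, rexp (-b * ‖v‖ ^ 2 + ⟪w, v⟫) =
      (π / b) ^ (Module.finrank ℝ V / 2 : ℝ) * rexp (‖w‖ ^ 2 / (4 * b)) := by
  have h := GaussianFourier.integral_cexp_neg_mul_sq_norm_add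
    (V := V) (b := (b : ℂ)) (by simpa using hb) 1 w
  rw [← Complex.ofReal_inj, ← integral_complex_ofReal]
  push_cast [Complex.ofReal_exp, Complex.ofReal_cpow (div_pos pi_pos hb).le]
  simpa using h

noncomputable def gaussKernel (a b c : ℝ) (x y : V) : ℝ :=
  rexp (-(a * ‖x‖ ^ 2 + b * ‖y‖ ^ 2 - 2 * c * ⟪x, y⟫))

theorem integral_gaussKernel_mul_gaussKernel {a₁ b₁ c₁ a₂ b₂ c₂ : ℝ} (hB : 0 < b₁ + a₂)
    (x y : V) :
    ∫ z : V, gaussKernel a₁ b₁ c₁ x z * gaussKernel a₂ b₂ c₂ z y =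
      (π / (b₁ + a₂)) ^ (Module.finrank ℝ V / 2 : ℝ) *
        gaussKernel (a₁ - c₁ ^ 2 / (b₁ + a₂)) (b₂ - c₂ ^ 2 / (b₁ + a₂))
          (c₁ * c₂ / (b₁ + a₂)) x y := by
  set B := b₁ + a₂
  set w : V := (2 * c₁) • x + (2 * c₂) • y
  have hsplit : ∀ z : V, gaussKernel a₁ b₁ c₁ x z * gaussKernel a₂ b₂ c₂ z y =
      rexp (-(a₁ * ‖x‖ ^ 2 + b₂ * ‖y‖ ^ 2)) * rexp (-B * ‖z‖ ^ 2 + ⟪w, z⟫) := by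
    intro z
    simp only [gaussKernel, ← Real.exp_add, w, B, inner_add_left, real_inner_smul_left,
      real_inner_comm z y]
    ring_nf
  have hw : ‖w‖ ^ 2 = 4 * (c₁ ^ 2 * ‖x‖ ^ 2 + 2 * c₁ * c₂ * ⟪x, y⟫ + c₂ ^ 2 * ‖y‖ ^ 2) := by
    simp only [w, norm_add_sq_real, norm_smul, real_inner_smul_left, real_inner_smul_right,
      mul_pow, Real.norm_eq_abs, sq_abs]
    ring
  simp_rw [hsplit]
  rw [integral_const_mul, integral_rexp_neg_mul_sq_norm_add_inner hB, hw, gaussKernel,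
    mul_left_comm, ← Real.exp_add]
  congr 2
  field_simp
  ring

end GaussianKernel

theorem mehler_eq_mul_gaussKernel (d : ℕ) (lam t : ℝ) (x y : EuclideanSpace ℝ (Fin d)) :
    mehler d lam x t y = (2 * π * sinh (lam * t) / lam) ^ (-(d : ℝ) / 2) *
      gaussKernel (lam * cosh (lam * t) / (2 * sinh (lam * t)))
        (lam * cosh (lam * t) / (2 * sinh (lam * t))) (lam / (2 * sinh (lam * t))) x y := by
  rw [mehler, gaussKernel]
  ring_nf

section HyperbolicIdentities

variable {lam s t : ℝ}

theorem mehler_coeff_add (hs : sinh (lam * s) ≠ 0) (ht : sinh (lam * t) ≠ 0) :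
    lam * cosh (lam * s) / (2 * sinh (lam * s)) + lam * cosh (lam * t) / (2 * sinh (lam * t)) =
      lam * sinh (lam * (s + t)) / (2 * sinh (lam * s) * sinh (lam * t)) := by
  rw [mul_add, sinh_add]
  field_simp
  ring

theorem mehler_coeff_sub_sq_div (hs : sinh (lam * s) ≠ 0) (ht : sinh (lam * t) ≠ 0)
    (hst : sinh (lam * (s + t)) ≠ 0) :
    lam * cosh (lam * s) / (2 * sinh (lam * s)) - (lam / (2 * sinh (lam * s))) ^ 2 /
      (lam * cosh (lam * s) / (2 * sinh (lam * s)) + lam * cosh (lam * t) / (2 * sinh (lam * t))) =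
      lam * cosh (lam * (s + t)) / (2 * sinh (lam * (s + t))) := by
  rw [mehler_coeff_add hs ht]
  rw [mul_add, sinh_add] at hst
  rw [mul_add, sinh_add, cosh_add]
  field_simp
  linear_combination lam * sinh (lam * t) * cosh_sq (lam * s)

theorem mehler_coeff_mul_div (hs : sinh (lam * s) ≠ 0) (ht : sinh (lam * t) ≠ 0)
    (hst : sinh (lam * (s + t)) ≠ 0) :
    lam / (2 * sinh (lam * s)) * (lam / (2 * sinh (lam * t))) /
      (lam * cosh (lam * s) / (2 * sinh (lam * s)) + lam * cosh (lam * t) / (2 * sinh (lam * t))) =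
      lam / (2 * sinh (lam * (s + t))) := by
  rw [mehler_coeff_add hs ht]
  field_simp

end HyperbolicIdentities

theorem rpow_neg_mul_rpow_neg_mul_rpow {p q r : ℝ} (hp : 0 ≤ p) (hq : 0 ≤ q) (hr : 0 ≤ r)
    (e : ℝ) : p ^ (-e) * q ^ (-e) * r ^ e = (p * q / r) ^ (-e) := by
  rw [Real.div_rpow (mul_nonneg hp hq) hr, Real.mul_rpow hp hq, Real.rpow_neg hp, Real.rpow_neg hq,
    Real.rpow_neg (by positivity)]
  field_simp

theorem mehler_chapman_kolmogorov_general (d : ℕ) (lam : ℝ) (hlam : 0 < lam)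
    (x y : EuclideanSpace ℝ (Fin d)) (s t : ℝ) (hs : 0 < s) (ht : 0 < t) :
    ∫ z : EuclideanSpace ℝ (Fin d), mehler d lam x s z * mehler d lam z t y =
      mehler d lam x (s + t) y := by
  have hS : 0 < sinh (lam * s) := sinh_pos_iff.mpr (by positivity)
  have hT : 0 < sinh (lam * t) := sinh_pos_iff.mpr (by positivity)
  have hST : 0 < sinh (lam * (s + t)) := sinh_pos_iff.mpr (by positivity)
  have hcoeff_add := mehler_coeff_add hS.ne' hT.ne'
  have hprefactor : 2 * π * sinh (lam * s) / lam * (2 * π * sinh (lam * t) / lam) /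
      (π / (lam * cosh (lam * s) / (2 * sinh (lam * s)) +
        lam * cosh (lam * t) / (2 * sinh (lam * t)))) = 2 * π * sinh (lam * (s + t)) / lam := by
    rw [hcoeff_add]
    field_simp
  simp_rw [mehler_eq_mul_gaussKernel, mul_mul_mul_comm]
  rw [integral_const_mul, integral_gaussKernel_mul_gaussKernel (by rw [hcoeff_add]; positivity),
    finrank_euclideanSpace_fin, ← mul_assoc, neg_div,
    rpow_neg_mul_rpow_neg_mul_rpow (by positivity) (by positivity) (by positivity), hprefactor,
    mehler_coeff_sub_sq_div hS.ne' hT.ne' hST.ne', mehler_coeff_mul_div hS.ne' hT.ne' hST.ne']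
  -- the coefficient of `‖y‖²` is that of `‖x‖²` with `s` and `t` exchanged
  rw [add_comm (lam * cosh (lam * s) / _),
    mehler_coeff_sub_sq_div hT.ne' hS.ne' (by rw [add_comm t s]; exact hST.ne'), add_comm t s]

theorem mehler_chapman_kolmogorov (d : ℕ) (hd : 0 < d) (lam : ℝ) (hlam : 0 < lam)
    (x y : EuclideanSpace ℝ (Fin d)) (s t : ℝ) (hs : 0 < s) (ht : 0 < t) :
    ∫ z : EuclideanSpace ℝ (Fin d), mehler d lam x s z * mehler d lam z t y =
      mehler d lam x (s + t) y :=
  mehler_chapman_kolmogorov_general d lam hlam x y s t hs ht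
end

section
/- For λ > 0 and T > 0, the diagonal of the Mehler kernel satisfies g_λ(x,T,x) = (λ/(2π sinh(λT)))^{d/2} exp[-λ(cosh(λT)-1)|x|²/sinh(λT)], and consequently ∫_{ℝ^d} g_λ(x,T,x) dx = (2(cosh(λT)-1))^{-d/2} = 𝒵_λ(T). -/
/-!
On the diagonal the Mehler kernel is a centred Gaussian `exp (-b ‖x‖²)` with
`b = λ (cosh λT - 1) / sinh λT`, so its integral is
`(λ / (2π sinh λT))^{d/2} (π / b)^{d/2} = (2 (cosh λT - 1))^{-d/2}`.
The spectral sum factorises over the `d` coordinates into geometric series, each summing to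
`e^{-s/2} / (1 - e^{-s}) = 1 / (2 sinh (s/2))` with `s = λT`, and `2 (cosh s - 1) = (2 sinh (s/2))²`.
-/

open Real MeasureTheory
open scoped RealInnerProductSpace

theorem HasSum.prod_fin_of_nonneg {β : Type*} {f : β → ℝ} {a : ℝ} (h : HasSum f a) (hf : 0 ≤ f)
    (d : ℕ) : HasSum (fun m : Fin d → β => ∏ j, f (m j)) (a ^ d) := by
  induction d with
  | zero => simp
  | succ d ih =>
    have hprod_nonneg : 0 ≤ fun m : Fin d → β => ∏ j, f (m j) :=
      fun m => Finset.prod_nonneg fun j _ => hf (m j)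
    have hsummable := h.summable.mul_of_nonneg ih.summable hf hprod_nonneg
    have hprod := h.mul ih hsummable
    rw [pow_succ', ← (Fin.consEquiv fun _ => β).hasSum_iff]
    have hcomp : (fun m : Fin (d + 1) → β => ∏ j, f (m j)) ∘ Fin.consEquiv (fun _ => β) =
        fun p => f p.1 * ∏ j, f (p.2 j) := by
      ext p
      simp [Fin.consEquiv, Fin.prod_univ_succ]
    rwa [hcomp]

theorem two_mul_sinh_half_eq_exp_mul (s : ℝ) :
    2 * sinh (s / 2) = exp (s / 2) * (1 - exp (-s)) := by
  rw [sinh_eq, mul_sub, ← exp_add]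
  ring_nf

theorem two_mul_cosh_sub_one_eq_sq (s : ℝ) : 2 * (cosh s - 1) = (2 * sinh (s / 2)) ^ 2 := by
  nth_rw 1 [show s = 2 * (s / 2) by ring]
  rw [cosh_two_mul, cosh_sq]
  ring

theorem hasSum_exp_neg_mul_add_half {s : ℝ} (hs : 0 < s) :
    HasSum (fun k : ℕ => exp (-(s * (k + 1 / 2)))) (2 * sinh (s / 2))⁻¹ := by
  have hgeom := hasSum_geometric_of_lt_one (exp_pos (-s)).le
    (exp_lt_one_iff.mpr (neg_neg_of_pos hs))
  have hterm : (fun k : ℕ => exp (-(s * (k + 1 / 2)))) =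
      fun k => exp (-(s / 2)) * exp (-s) ^ k := by
    ext k
    rw [← exp_nat_mul, ← exp_add]
    ring_nf
  rw [hterm, two_mul_sinh_half_eq_exp_mul, mul_inv, ← exp_neg]
  exact hgeom.mul_left _

theorem tsum_exp_neg_mul_sum_add_half {s : ℝ} (hs : 0 < s) (d : ℕ) :
    ∑' m : Fin d → ℕ, exp (-(s * ((∑ j, (m j : ℝ)) + d / 2))) =
      (2 * (cosh s - 1)) ^ (-(d : ℝ) / 2) := by
  have hsum := (hasSum_exp_neg_mul_add_half hs).prod_fin_of_nonneg (fun k => (exp_pos _).le) d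
  have hsinh : 0 ≤ 2 * sinh (s / 2) := by positivity
  rw [two_mul_cosh_sub_one_eq_sq, ← rpow_natCast_mul hsinh, Nat.cast_ofNat,
    show (2 : ℝ) * (-(d : ℝ) / 2) = -d by ring, rpow_neg hsinh, rpow_natCast, ← inv_pow,
    ← hsum.tsum_eq]
  congr 1 with m
  rw [← exp_sum]
  congr 1
  simp only [Finset.sum_neg_distrib, ← Finset.mul_sum, Finset.sum_add_distrib, Finset.sum_const,
    Finset.card_univ, Fintype.card_fin, nsmul_eq_mul]
  ring

theorem mehler_self (d : ℕ) (lam t : ℝ) (x : EuclideanSpace ℝ (Fin d)) :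
    mehler d lam x t x =
      (lam / (2 * π * sinh (lam * t))) ^ ((d : ℝ) / 2) *
        exp (-(lam * (cosh (lam * t) - 1) * ‖x‖ ^ 2 / sinh (lam * t))) := by
  rw [mehler, neg_div, rpow_neg_eq_inv_rpow, inv_div, real_inner_self_eq_norm_sq]
  ring_nf

theorem integral_mehler_self (d : ℕ) {lam t : ℝ} (hlam : 0 < lam) (ht : 0 < t) :
    ∫ x : EuclideanSpace ℝ (Fin d), mehler d lam x t x =
      (2 * (cosh (lam * t) - 1)) ^ (-(d : ℝ) / 2) := by
  have hs : 0 < lam * t := mul_pos hlam ht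
  have hsinh : 0 < sinh (lam * t) := sinh_pos_iff.mpr hs
  have hcosh : 0 < cosh (lam * t) - 1 := sub_pos.mpr (one_lt_cosh.mpr hs.ne')
  set b := lam * (cosh (lam * t) - 1) / sinh (lam * t) with hb_def
  have hb : 0 < b := by positivity
  have hgaussian : ∀ x : EuclideanSpace ℝ (Fin d), mehler d lam x t x =
      (lam / (2 * π * sinh (lam * t))) ^ ((d : ℝ) / 2) * exp (-b * ‖x‖ ^ 2) := fun x => by
    rw [mehler_self, hb_def]
    ring_nf
  rw [integral_congr_ae (.of_forall hgaussian), integral_const_mul,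
    GaussianFourier.integral_rexp_neg_mul_sq_norm hb, finrank_euclideanSpace_fin,
    ← mul_rpow (by positivity) (by positivity), neg_div, rpow_neg_eq_inv_rpow, hb_def]
  congr 1
  field_simp

theorem mehler_diagonal_general (d : ℕ) (lam T : ℝ) (hlam : 0 < lam) (hT : 0 < T) :
    (∀ x : EuclideanSpace ℝ (Fin d),
        mehler d lam x T x =
          (lam / (2 * Real.pi * Real.sinh (lam * T))) ^ ((d : ℝ) / 2) *
            Real.exp (-(lam * (Real.cosh (lam * T) - 1) * ‖x‖ ^ 2 / Real.sinh (lam * T)))) ∧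
    (∫ x : EuclideanSpace ℝ (Fin d), mehler d lam x T x) =
        (2 * (Real.cosh (lam * T) - 1)) ^ (-(d : ℝ) / 2) ∧
    (∫ x : EuclideanSpace ℝ (Fin d), mehler d lam x T x) =
        ∑' m : Fin d → ℕ, Real.exp (-(T * ((∑ j, (m j : ℝ)) + d / 2) * lam)) := by
  refine ⟨mehler_self d lam T, integral_mehler_self d hlam hT, ?_⟩
  rw [integral_mehler_self d hlam hT, ← tsum_exp_neg_mul_sum_add_half (mul_pos hlam hT)]
  congr 1 with m
  ring_nf

theorem mehler_diagonal (d : ℕ) (hd : 0 < d) (lam T : ℝ) (hlam : 0 < lam) (hT : 0 < T) :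
    (∀ x : EuclideanSpace ℝ (Fin d),
        mehler d lam x T x =
          (lam / (2 * Real.pi * Real.sinh (lam * T))) ^ ((d : ℝ) / 2) *
            Real.exp (-(lam * (Real.cosh (lam * T) - 1) * ‖x‖ ^ 2 / Real.sinh (lam * T)))) ∧
    (∫ x : EuclideanSpace ℝ (Fin d), mehler d lam x T x) =
        (2 * (Real.cosh (lam * T) - 1)) ^ (-(d : ℝ) / 2) ∧
    (∫ x : EuclideanSpace ℝ (Fin d), mehler d lam x T x) =
        ∑' m : Fin d → ℕ, Real.exp (-(T * ((∑ j, (m j : ℝ)) + d / 2) * lam)) :=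
  mehler_diagonal_general d lam T hlam hT
end

section
/- For 0 ≤ s ≤ t ≤ T and λ > 0, the function C(s,t) = cosh(λ(|t-s| - T/2))/(2λ sinh(λT/2)) equals (exp(-λ|t-s|) + exp(-λ(T - |t-s|)))/(2λ(1 - exp(-λT))), and for 0 ≤ t₁ ≤ t₂ ≤ T the 2×2 matrix with entries C(t_i, t_j) is positive semidefinite. -/
/-!
Pulling the factor `exp (-λT/2)` out of both the numerator and the denominator of the
exponential form turns it into the hyperbolic one. The matrix is `[[a, b], [b, a]]` with
`a = C t t` and `b = C t₁ t₂`, positive semidefinite as soon as `|b| ≤ a`. Since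
`λ sinh (λT/2) ≥ 0`, that bound is the monotonicity of `cosh` in `|x|`, applied to
`|t₂ - t₁ - T/2| ≤ T/2`.
-/

open Real

lemma exp_neg_add_exp_neg_sub (x y : ℝ) :
    exp (-x) + exp (-(y - x)) = exp (-(y / 2)) * (2 * cosh (x - y / 2)) := by
  rw [cosh_eq, mul_div_cancel₀ _ two_ne_zero, mul_add, ← exp_add, ← exp_add]
  ring_nf

lemma one_sub_exp_neg (y : ℝ) : 1 - exp (-y) = exp (-(y / 2)) * (2 * sinh (y / 2)) := by
  rw [sinh_eq, mul_div_cancel₀ _ two_ne_zero, mul_sub, ← exp_add, ← exp_add, neg_add_cancel,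
    exp_zero, ← neg_add, add_halves]

lemma cosh_div_sinh_eq_exp_div (l T d : ℝ) :
    cosh (l * (d - T / 2)) / (2 * l * sinh (l * T / 2)) =
      (exp (-(l * d)) + exp (-(l * (T - d)))) / (2 * l * (1 - exp (-(l * T)))) := by
  rw [mul_sub l T d, exp_neg_add_exp_neg_sub, one_sub_exp_neg]
  have h : exp (-(l * T / 2)) * 2 ≠ 0 := by positivity
  convert (mul_div_mul_left _ _ h).symm using 1
  rw [mul_sub l d, ← mul_div_assoc]
  ring

lemma mul_sinh_mul_nonneg (l : ℝ) {x : ℝ} (hx : 0 ≤ x) : 0 ≤ l * sinh (l * x) := by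
  rcases le_total 0 l with hl | hl
  · exact mul_nonneg hl (sinh_nonneg_iff.2 (mul_nonneg hl hx))
  · exact mul_nonneg_of_nonpos_of_nonpos hl
      (sinh_nonpos_iff.2 (mul_nonpos_of_nonpos_of_nonneg hl hx))

lemma posSemidef_of_abs_le {a b : ℝ} (h : |b| ≤ a) :
    (Matrix.of ![![a, b], ![b, a]]).PosSemidef := by
  obtain ⟨hlow, hup⟩ := abs_le.1 h
  refine Matrix.PosSemidef.of_dotProduct_mulVec_nonneg ?_ fun x ↦ ?_
  · ext i j
    fin_cases i <;> fin_cases j <;> rfl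
  · simp only [dotProduct, Pi.star_apply, star_trivial, Matrix.mulVec, Matrix.of_apply,
      Matrix.cons_val', Matrix.cons_val_fin_one, Fin.sum_univ_two, Matrix.cons_val_zero,
      Matrix.cons_val_one]
    -- twice the quadratic form is `(a + b) (x₀ + x₁)² + (a - b) (x₀ - x₁)²`
    nlinarith [mul_nonneg (sub_nonneg.2 hup) (sq_nonneg (x 0 - x 1)),
      mul_nonneg (neg_le_iff_add_nonneg.1 hlow) (sq_nonneg (x 0 + x 1))]

theorem periodic_OU_covariance_general (lam T : ℝ) :
    let C : ℝ → ℝ → ℝ := fun s t =>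
      Real.cosh (lam * (|t - s| - T / 2)) / (2 * lam * Real.sinh (lam * T / 2))
    (∀ s t, 0 ≤ s → s ≤ t → t ≤ T →
      C s t = (Real.exp (-(lam * |t - s|)) + Real.exp (-(lam * (T - |t - s|)))) /
        (2 * lam * (1 - Real.exp (-(lam * T))))) ∧
    (∀ t₁ t₂, 0 ≤ t₁ → t₁ ≤ t₂ → t₂ ≤ T →
      (Matrix.of ![![C t₁ t₁, C t₁ t₂], ![C t₂ t₁, C t₂ t₂]]).PosSemidef) := by
  intro C
  refine ⟨fun s t _ _ _ ↦ cosh_div_sinh_eq_exp_div lam T |t - s|, fun t₁ t₂ h₁ h₁₂ h₂ ↦ ?_⟩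
  have hsymm : C t₂ t₁ = C t₁ t₂ := by simp only [C, abs_sub_comm]
  have hdiag : C t₂ t₂ = C t₁ t₁ := by simp only [C, sub_self]
  rw [hsymm, hdiag]
  refine posSemidef_of_abs_le ?_
  have hden : 0 ≤ 2 * lam * sinh (lam * T / 2) := by
    rw [mul_assoc, mul_div_assoc]
    exact mul_nonneg zero_le_two (mul_sinh_mul_nonneg lam (by linarith))
  have hd : |t₂ - t₁| = t₂ - t₁ := abs_of_nonneg (by linarith)
  simp only [C, sub_self, abs_zero, hd]
  rw [abs_div, abs_of_pos (cosh_pos _), abs_of_nonneg hden]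
  refine div_le_div_of_nonneg_right (cosh_le_cosh.2 ?_) hden
  rw [abs_mul, abs_mul, zero_sub, abs_neg, abs_of_nonneg (by linarith : 0 ≤ T / 2)]
  exact mul_le_mul_of_nonneg_left (abs_le.2 ⟨by linarith, by linarith⟩) (abs_nonneg _)

theorem periodic_OU_covariance (lam T : ℝ) (hlam : 0 < lam) (hT : 0 < T) :
    let C : ℝ → ℝ → ℝ := fun s t =>
      Real.cosh (lam * (|t - s| - T / 2)) / (2 * lam * Real.sinh (lam * T / 2))
    (∀ s t, 0 ≤ s → s ≤ t → t ≤ T →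
      C s t = (Real.exp (-(lam * |t - s|)) + Real.exp (-(lam * (T - |t - s|)))) /
        (2 * lam * (1 - Real.exp (-(lam * T))))) ∧
    (∀ t₁ t₂, 0 ≤ t₁ → t₁ ≤ t₂ → t₂ ≤ T →
      (Matrix.of ![![C t₁ t₁, C t₁ t₂], ![C t₂ t₁, C t₂ t₂]]).PosSemidef) :=
  periodic_OU_covariance_general lam T
end
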